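/- arXiv:2504.14056 — 3 statements merged into one kernel-verified Lean document; each statement's English description precedes it below -/
import Mathlib

section
/- (Generalized Chung's lemma) Let A, B, c, p > 0 and let {e^k} be a sequence of nonnegative reals satisfying e^{k+1} ≤ (1 − c/k + A/k^{1+p}) e^k + B/k^{p+1} for all k ≥ 1. Then: (i) if c > p, then e^k ≤ (A + B)(c − p)^{-1} k^{-p} + o(k^{-p}) as k → ∞; (ii) if c = p, then e^k = O(k^{-c} log k); and (iii) if p > c, then e^k = O(k^{-c}). -/
/-!
Once `e k ≤ 1`, the perturbation `A k^(-(1+p)) e k` is absorbed into the forcing term, so `e` is a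
subsolution of the linear recursion `x (k+1) = (1 - c/k) x k + D k^(-(p+1))` with `D = A + B`;
and `e k → 0` follows from the same argument run with `c/2` in place of `c`, the perturbation
being absorbed into the contraction instead. By convexity of `t ↦ t^(-c)`, `k^(-c)` is a
supersolution of the homogeneous recursion, so a subsolution is bounded by `C k^(-c) + F k` for
every supersolution `F` of the forced one. It remains to exhibit `F`: `D (c-p)⁻¹ t^(-p)` if
`c > p`, `4 D t^(-c) log t` if `c = p`, and `-2 D (p-c)⁻¹ t^(-p)` if `p > c`.
-/

open Filter Asymptotics Topology

theorem Real.rpow_neg_sub_mul_le {r a b : ℝ} (hr : 0 ≤ r) (ha : 0 < a) (hb : 0 < b) :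
    a ^ (-r) - r * a ^ (-r - 1) * (b - a) ≤ b ^ (-r) := by
  have hba : 0 < b / a := div_pos hb ha
  have bernoulli : 1 - r * (b / a - 1) ≤ (b / a) ^ (-r) := by
    rw [Real.rpow_def_of_pos hba]
    nlinarith [Real.add_one_le_exp (Real.log (b / a) * -r), Real.log_le_sub_one_of_pos hba]
  calc a ^ (-r) - r * a ^ (-r - 1) * (b - a) = a ^ (-r) * (1 - r * (b / a - 1)) := by
        rw [Real.rpow_sub_one ha.ne']; field_simp
    _ ≤ a ^ (-r) * (b / a) ^ (-r) := by gcongr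
    _ = b ^ (-r) := by
        rw [Real.div_rpow hb.le ha.le, mul_div_cancel₀ _ (Real.rpow_pos_of_pos ha _).ne']

theorem Real.rpow_neg_add_one_le {r t : ℝ} (hr : 0 ≤ r) (ht : 0 < t) :
    (t + 1) ^ (-r) ≤ t ^ (-r) - r * t ^ (-r - 1) + r * (r + 1) * t ^ (-r - 2) := by
  have at_succ := Real.rpow_neg_sub_mul_le hr (by linarith : 0 < t + 1) ht
  have at_self := Real.rpow_neg_sub_mul_le (by linarith : 0 ≤ r + 1) ht (by linarith : 0 < t + 1)
  rw [show -(r + 1) = -r - 1 by ring, show -r - 1 - 1 = -r - 2 by ring] at at_self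
  linarith [at_succ, mul_le_mul_of_nonneg_left at_self hr]

theorem Real.one_sub_div_mul_rpow_neg_le {c t : ℝ} (hc : 0 ≤ c) (ht : 0 < t) :
    (1 - c / t) * t ^ (-c) ≤ (t + 1) ^ (-c) := by
  have tangent := Real.rpow_neg_sub_mul_le hc ht (by linarith : 0 < t + 1)
  rw [Real.rpow_sub_one ht.ne'] at tangent
  calc (1 - c / t) * t ^ (-c) = t ^ (-c) - c * (t ^ (-c) / t) * (t + 1 - t) := by ring
    _ ≤ (t + 1) ^ (-c) := tangent

theorem le_of_subsolution_of_supersolution {e f w g : ℕ → ℝ} {K : ℕ}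
    (hw : ∀ k ≥ K, 0 ≤ w k) (he : ∀ k ≥ K, e (k + 1) ≤ w k * e k + g k)
    (hf : ∀ k ≥ K, w k * f k + g k ≤ f (k + 1)) (hK : e K ≤ f K) :
    ∀ k ≥ K, e k ≤ f k := by
  intro k hk
  induction k, hk using Nat.le_induction with
  | base => exact hK
  | succ k hk ih => nlinarith [he k hk, hf k hk, mul_le_mul_of_nonneg_left ih (hw k hk)]

def IsChungSubsolution (c D p : ℝ) (e : ℕ → ℝ) : Prop :=
  ∀ᶠ k : ℕ in atTop, e (k + 1) ≤ (1 - c / k) * e k + D * (k : ℝ) ^ (-(p + 1))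

def IsChungSupersolution (c D p : ℝ) (F : ℝ → ℝ) : Prop :=
  ∀ᶠ t : ℝ in atTop, (1 - c / t) * F t + D * t ^ (-(p + 1)) ≤ F (t + 1)

theorem IsChungSubsolution.exists_le_rpow_neg_add {c D p : ℝ} {e : ℕ → ℝ} {F : ℝ → ℝ}
    (he : IsChungSubsolution c D p e) (hF : IsChungSupersolution c D p F) (hc : 0 ≤ c) :
    ∃ C, ∀ᶠ k : ℕ in atTop, e k ≤ C * (k : ℝ) ^ (-c) + F k := by
  obtain ⟨K, hK⟩ := eventually_atTop.1 (he.and ((tendsto_natCast_atTop_atTop.eventually hF).and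
    (tendsto_natCast_atTop_atTop.eventually (eventually_ge_atTop (max c 1)))))
  have large : ∀ k ≥ K, c ≤ (k : ℝ) ∧ (0 : ℝ) < k := fun k hk =>
    ⟨(le_max_left c 1).trans (hK k hk).2.2, by linarith [le_max_right c 1, (hK k hk).2.2]⟩
  set C := max 0 ((e K - F K) * (K : ℝ) ^ c)
  refine ⟨C, eventually_atTop.2 ⟨K, le_of_subsolution_of_supersolution
    (w := fun k => 1 - c / k) (g := fun k => D * (k : ℝ) ^ (-(p + 1))) ?_
    (fun k hk => (hK k hk).1) ?_ ?_⟩⟩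
  · intro k hk
    simpa using div_le_one_of_le₀ (large k hk).1 (large k hk).2.le
  · intro k hk
    have homogeneous := mul_le_mul_of_nonneg_left
      (Real.one_sub_div_mul_rpow_neg_le hc (large k hk).2) (le_max_left 0 _ : 0 ≤ C)
    push_cast
    linarith [(hK k hk).2.1]
  · have : e K - F K ≤ C * (K : ℝ) ^ (-c) :=
      calc e K - F K = (e K - F K) * (K : ℝ) ^ c * (K : ℝ) ^ (-c) := by
            rw [mul_assoc, ← Real.rpow_add (large K le_rfl).2]; simp
        _ ≤ C * (K : ℝ) ^ (-c) := by gcongr; exact le_max_right _ _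
    linarith

theorem isChungSupersolution_rpow_neg {c D p : ℝ} (hp : 0 ≤ p) (hpc : p < c) (hD : 0 ≤ D) :
    IsChungSupersolution c D p fun t => D * (c - p)⁻¹ * t ^ (-p) := by
  filter_upwards [eventually_gt_atTop 0] with t ht
  have tangent := Real.rpow_neg_sub_mul_le hp ht (by linarith : 0 < t + 1)
  have hγ : 0 ≤ D * (c - p)⁻¹ := mul_nonneg hD (inv_nonneg.2 (by linarith))
  have hcp : c - p ≠ 0 := by linarith
  rw [Real.rpow_sub_one ht.ne'] at tangent
  rw [show -(p + 1) = -p - 1 by ring, Real.rpow_sub_one ht.ne']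
  calc (1 - c / t) * (D * (c - p)⁻¹ * t ^ (-p)) + D * (t ^ (-p) / t)
      = D * (c - p)⁻¹ * (t ^ (-p) - p * (t ^ (-p) / t) * (t + 1 - t)) := by field_simp; ring
    _ ≤ D * (c - p)⁻¹ * (t + 1) ^ (-p) := by gcongr

theorem isChungSupersolution_rpow_neg_mul_log {c D : ℝ} (hc : 0 ≤ c) (hD : 0 ≤ D) :
    IsChungSupersolution c D c fun t => 4 * D * t ^ (-c) * Real.log t := by
  filter_upwards [eventually_ge_atTop 1, eventually_ge_atTop (2 * c)] with t ht1 ht2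
  have ht : 0 < t := by linarith
  set u := (1 - c / t) * t ^ (-c)
  have hu : 0 ≤ u := mul_nonneg (by rw [sub_nonneg, div_le_one ht]; linarith) (by positivity)
  have hu_le : u ≤ (t + 1) ^ (-c) := Real.one_sub_div_mul_rpow_neg_le hc ht
  have log_gap : 1 / (t + 1) ≤ Real.log (t + 1) - Real.log t := by
    have := Real.one_sub_inv_le_log_of_pos (by positivity : 0 < (t + 1) / t)
    rw [Real.log_div (by linarith) ht.ne', inv_div] at this
    convert this using 1
    field_simp
    ring
  have forcing : D * t ^ (-(c + 1)) ≤ 4 * D * u * (1 / (t + 1)) := by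
    have half : 1 / 2 ≤ 1 - c / t := by rw [le_sub_comm, div_le_iff₀ ht]; linarith
    have : 1 / t ≤ 4 * (1 - c / t) / (t + 1) := by
      rw [div_le_div_iff₀ ht (by linarith)]; nlinarith
    rw [show -(c + 1) = -c - 1 by ring, Real.rpow_sub_one ht.ne']
    calc D * (t ^ (-c) / t) = D * t ^ (-c) * (1 / t) := by ring
      _ ≤ D * t ^ (-c) * (4 * (1 - c / t) / (t + 1)) := by gcongr
      _ = 4 * D * u * (1 / (t + 1)) := by ring
  calc (1 - c / t) * (4 * D * t ^ (-c) * Real.log t) + D * t ^ (-(c + 1))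
      ≤ 4 * D * u * Real.log t + 4 * D * u * (Real.log (t + 1) - Real.log t) := by
        have := mul_le_mul_of_nonneg_left log_gap (by positivity : 0 ≤ 4 * D * u)
        linarith
    _ = 4 * D * u * Real.log (t + 1) := by ring
    _ ≤ 4 * D * (t + 1) ^ (-c) * Real.log (t + 1) := by
        gcongr
        exact Real.log_nonneg (by linarith)

theorem isChungSupersolution_neg_rpow_neg {c D p : ℝ} (hp : 0 ≤ p) (hcp : c < p)
    (hD : 0 ≤ D) :
    IsChungSupersolution c D p fun t => -(2 * D * (p - c)⁻¹ * t ^ (-p)) := by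
  filter_upwards [eventually_gt_atTop 0, eventually_ge_atTop (2 * p * (p + 1) / (p - c))]
    with t ht ht_large
  set β := 2 * D * (p - c)⁻¹
  have hβ : 0 ≤ β := mul_nonneg (by linarith) (inv_nonneg.2 (by linarith))
  have hpc : p - c ≠ 0 := by linarith
  have hβpc : β * (p - c) = 2 * D := by simp only [β]; field_simp
  -- the threshold on `t` lets the forcing term swallow the second-order term of `(t+1)^(-p)`
  have second_order : β * p * (p + 1) ≤ D * t := by
    calc β * p * (p + 1) = D * (2 * p * (p + 1) / (p - c)) := by
          simp only [β]; field_simp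
      _ ≤ D * t := by gcongr
  have upper := mul_le_mul_of_nonneg_left (Real.rpow_neg_add_one_le hp ht) hβ
  rw [show -(p + 1) = -p - 1 by ring]
  rw [show -p - 2 = -p - 1 - 1 by ring] at upper
  simp only [Real.rpow_sub_one ht.ne'] at upper ⊢
  set x := t ^ (-p)
  have absorbed : β * p * (p + 1) * (x / t / t) ≤ D * (x / t) :=
    calc β * p * (p + 1) * (x / t / t) ≤ D * t * (x / t / t) := by gcongr
      _ = D * (x / t) := by field_simp
  calc (1 - c / t) * -(β * x) + D * (x / t)
      = -(β * (x - p * (x / t) + p * (p + 1) * (x / t / t)))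
        + (β * p * (p + 1) * (x / t / t) - D * (x / t)) - (β * (p - c) - 2 * D) * (x / t) := by
        field_simp; ring
    _ ≤ -(β * (t + 1) ^ (-p)) := by rw [hβpc]; linarith

theorem isLittleO_const_mul_rpow_neg_natCast {c p : ℝ} (hpc : p < c) (C : ℝ) :
    (fun k : ℕ => C * (k : ℝ) ^ (-c)) =o[atTop] fun k : ℕ => (k : ℝ) ^ (-p) := by
  have vanishing : (fun t : ℝ => t ^ (-(c - p))) =o[atTop] fun _ => (1 : ℝ) :=
    (isLittleO_one_iff ℝ).2 (tendsto_rpow_neg_atTop (by linarith))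
  have : (fun t : ℝ => t ^ (-c)) =o[atTop] fun t => t ^ (-p) := by
    refine (vanishing.mul_isBigO (isBigO_refl (fun t : ℝ => t ^ (-p)) atTop)).congr' ?_
      (by simp only [one_mul]; rfl)
    filter_upwards [eventually_gt_atTop 0] with t ht
    rw [← Real.rpow_add ht]
    ring_nf
  exact (this.const_mul_left C).natCast_atTop

namespace IsChungSubsolution

variable {c D p : ℝ} {e : ℕ → ℝ}

theorem exists_isLittleO (he : IsChungSubsolution c D p e) (hp : 0 ≤ p) (hpc : p < c)
    (hD : 0 ≤ D) :
    ∃ h : ℕ → ℝ, h =o[atTop] (fun k : ℕ => (k : ℝ) ^ (-p)) ∧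
      ∀ᶠ k : ℕ in atTop, e k ≤ D * (c - p)⁻¹ * (k : ℝ) ^ (-p) + h k := by
  obtain ⟨C, hC⟩ :=
    he.exists_le_rpow_neg_add (isChungSupersolution_rpow_neg hp hpc hD) (by linarith)
  exact ⟨_, isLittleO_const_mul_rpow_neg_natCast hpc C, hC.mono fun k hk => by linarith⟩

theorem isBigO_rpow_neg_mul_log (he : IsChungSubsolution c D c e) (he₀ : ∀ k, 0 ≤ e k)
    (hc : 0 ≤ c) (hD : 0 ≤ D) :
    e =O[atTop] fun k : ℕ => (k : ℝ) ^ (-c) * Real.log k := by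
  obtain ⟨C, hC⟩ :=
    he.exists_le_rpow_neg_add (isChungSupersolution_rpow_neg_mul_log hc hD) hc
  have bound : (fun k : ℕ => C * (k : ℝ) ^ (-c) + 4 * D * (k : ℝ) ^ (-c) * Real.log k)
      =O[atTop] fun k : ℕ => (k : ℝ) ^ (-c) * Real.log k := by
    have const_log := (Real.isLittleO_const_log_atTop (c := C)).natCast_atTop
    refine IsBigO.add ?_ ?_
    · simpa [mul_comm] using
        (isBigO_refl (fun k : ℕ => (k : ℝ) ^ (-c)) atTop).mul const_log.isBigO
    · simpa [mul_assoc] using (isBigO_refl _ atTop).const_mul_left (4 * D)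
  refine IsBigO.trans (IsBigO.of_norm_eventuallyLE ?_) bound
  filter_upwards [hC] with k hk
  simpa [abs_of_nonneg (he₀ k)] using hk

theorem isBigO_rpow_neg (he : IsChungSubsolution c D p e) (he₀ : ∀ k, 0 ≤ e k) (hc : 0 ≤ c)
    (hcp : c < p) (hD : 0 ≤ D) :
    e =O[atTop] fun k : ℕ => (k : ℝ) ^ (-c) := by
  obtain ⟨C, hC⟩ :=
    he.exists_le_rpow_neg_add (isChungSupersolution_neg_rpow_neg (by linarith) hcp hD) hc
  refine IsBigO.trans (IsBigO.of_norm_eventuallyLE ?_) ((isBigO_refl _ atTop).const_mul_left C)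
  filter_upwards [hC] with k hk
  have : 0 ≤ 2 * D * (p - c)⁻¹ * (k : ℝ) ^ (-p) := by
    have := inv_nonneg.2 (by linarith : 0 ≤ p - c); positivity
  simp only [Real.norm_eq_abs, abs_of_nonneg (he₀ k)]
  linarith

theorem mono_exponent {q : ℝ} (he : IsChungSubsolution c D p e) (hqp : q ≤ p) (hD : 0 ≤ D) :
    IsChungSubsolution c D q e := by
  filter_upwards [he, eventually_ge_atTop 1] with k hk hk1
  have : (k : ℝ) ^ (-(p + 1)) ≤ (k : ℝ) ^ (-(q + 1)) :=
    Real.rpow_le_rpow_of_exponent_le (by exact_mod_cast hk1) (by linarith)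
  exact hk.trans (by gcongr)

theorem tendsto_zero (he : IsChungSubsolution c D p e) (he₀ : ∀ k, 0 ≤ e k) (hc : 0 < c)
    (hp : 0 < p) (hD : 0 ≤ D) : Tendsto e atTop (𝓝 0) := by
  -- lowering the exponent to `q < c` puts us in the case `c > p`
  set q := min p (c / 2)
  have hq : 0 < q := lt_min hp (by linarith)
  have hqc : q < c := (min_le_right _ _).trans_lt (by linarith)
  obtain ⟨h, hh, hle⟩ := (he.mono_exponent (min_le_left _ _) hD).exists_isLittleO hq.le hqc hD
  have rpow_lim : Tendsto (fun k : ℕ => (k : ℝ) ^ (-q)) atTop (𝓝 0) :=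
    (tendsto_rpow_neg_atTop hq).comp tendsto_natCast_atTop_atTop
  have bound_lim := (rpow_lim.const_mul (D * (c - q)⁻¹)).add (hh.trans_tendsto rpow_lim)
  rw [mul_zero, zero_add] at bound_lim
  exact tendsto_of_tendsto_of_tendsto_of_le_of_le' tendsto_const_nhds bound_lim
    (Eventually.of_forall he₀) hle

end IsChungSubsolution

section Perturbed

variable {A B c p : ℝ} {e : ℕ → ℝ}

theorem isChungSubsolution_of_perturbed_of_lt {c' : ℝ} (hc' : c' < c) (hp : 0 < p)
    (he₀ : ∀ k, 0 ≤ e k)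
    (hrec : ∀ᶠ k : ℕ in atTop,
      e (k + 1) ≤ (1 - c / k + A / (k : ℝ) ^ ((1 : ℝ) + p)) * e k + B / (k : ℝ) ^ (p + 1)) :
    IsChungSubsolution c' B p e := by
  have small : ∀ᶠ k : ℕ in atTop, A * (k : ℝ) ^ (-p) ≤ c - c' := by
    refine Tendsto.eventually_le_const (sub_pos.2 hc') ?_
    simpa using ((tendsto_rpow_neg_atTop hp).comp tendsto_natCast_atTop_atTop).const_mul A
  filter_upwards [hrec, small, eventually_gt_atTop 0] with k hk hsmall hk0
  have hk0 : (0 : ℝ) < k := by exact_mod_cast hk0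
  have perturbation : A / (k : ℝ) ^ ((1 : ℝ) + p) ≤ c / k - c' / k :=
    calc A / (k : ℝ) ^ ((1 : ℝ) + p) = A * (k : ℝ) ^ (-p) / k := by
          rw [Real.rpow_add hk0, Real.rpow_one, Real.rpow_neg hk0.le]; field_simp
      _ ≤ (c - c') / k := by gcongr
      _ = c / k - c' / k := sub_div c c' k
  rw [Real.rpow_neg hk0.le, ← div_eq_mul_inv]
  refine hk.trans ?_
  gcongr
  · exact he₀ k
  · linarith

theorem isChungSubsolution_of_perturbed_of_le_one (hA : 0 ≤ A)
    (hrec : ∀ᶠ k : ℕ in atTop,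
      e (k + 1) ≤ (1 - c / k + A / (k : ℝ) ^ ((1 : ℝ) + p)) * e k + B / (k : ℝ) ^ (p + 1))
    (he₁ : ∀ᶠ k in atTop, e k ≤ 1) :
    IsChungSubsolution c (A + B) p e := by
  filter_upwards [hrec, he₁, eventually_gt_atTop 0] with k hk hk1 hk0
  have hk0 : (0 : ℝ) < k := by exact_mod_cast hk0
  have : A / (k : ℝ) ^ ((1 : ℝ) + p) * e k ≤ A / (k : ℝ) ^ ((1 : ℝ) + p) :=
    mul_le_of_le_one_right (by positivity) hk1
  rw [add_comm (1 : ℝ) p] at hk this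
  rw [Real.rpow_neg hk0.le, ← div_eq_mul_inv, add_div]
  linarith

theorem isChungSubsolution_of_perturbed (hA : 0 ≤ A) (hc : 0 < c) (hp : 0 < p) (hB : 0 ≤ B)
    (he₀ : ∀ k, 0 ≤ e k)
    (hrec : ∀ᶠ k : ℕ in atTop,
      e (k + 1) ≤ (1 - c / k + A / (k : ℝ) ^ ((1 : ℝ) + p)) * e k + B / (k : ℝ) ^ (p + 1)) :
    IsChungSubsolution c (A + B) p e := by
  have tendsto_zero := (isChungSubsolution_of_perturbed_of_lt (half_lt_self hc) hp he₀
    hrec).tendsto_zero he₀ (half_pos hc) hp hB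
  exact isChungSubsolution_of_perturbed_of_le_one hA hrec
    (tendsto_zero.eventually_le_const one_pos)

end Perturbed

/-- **Generalized Chung's lemma.** For nonnegative `e^k` with
`e^{k+1} ≤ (1 − c/k + A/k^{1+p}) e^k + B/k^{p+1}` (k ≥ 1):
(i) if `c > p`, then eventually `e^k ≤ (A+B)(c−p)⁻¹ k^{−p} + o(k^{−p})`;
(ii) if `c = p`, then `e^k = O(k^{−c} log k)`; (iii) if `p > c`, then `e^k = O(k^{−c})`. -/
theorem stmt_10 (A B c p : ℝ) (hA : 0 < A) (hB : 0 < B) (hc : 0 < c) (hp : 0 < p)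
    (e : ℕ → ℝ) (he : ∀ k, 0 ≤ e k)
    (hrec : ∀ k : ℕ, 1 ≤ k →
      e (k + 1) ≤ (1 - c / k + A / (k : ℝ) ^ ((1 : ℝ) + p)) * e k + B / (k : ℝ) ^ (p + 1)) :
    (c > p → ∃ h : ℕ → ℝ, h =o[atTop] (fun k : ℕ => (k : ℝ) ^ (-p)) ∧
      ∀ᶠ k : ℕ in atTop, e k ≤ (A + B) * (c - p)⁻¹ * (k : ℝ) ^ (-p) + h k) ∧
    (c = p → (fun k : ℕ => e k) =O[atTop] fun k : ℕ => (k : ℝ) ^ (-c) * Real.log k) ∧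
    (p > c → (fun k : ℕ => e k) =O[atTop] fun k : ℕ => (k : ℝ) ^ (-c)) := by
  have hD : 0 ≤ A + B := by positivity
  have hsub : IsChungSubsolution c (A + B) p e :=
    isChungSubsolution_of_perturbed hA.le hc hp hB.le he (eventually_atTop.2 ⟨1, hrec⟩)
  refine ⟨fun hpc => hsub.exists_isLittleO hp.le hpc hD, fun hcp => ?_,
    fun hcp => hsub.isBigO_rpow_neg he hc.le hcp hD⟩
  subst hcp
  exact hsub.isBigO_rpow_neg_mul_log he hc.le hD
end

section
/- Let X ⊆ ℝⁿ be a convex set and let P be continuously differentiable on an open set containing X. Then the gradient map ∇P is pseudomonotone on X if and only if P is pseudoconvex on X. -/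
local notation "⟪" x ", " y "⟫" => @inner ℝ _ _ x y

/-! A pseudoconvex function is maximised on the segment `[x, y]` at `y` whenever
`⟪∇P x, y - x⟫ ≥ 0`: at an interior point `z` the vectors `x - z` and `y - z` point in opposite
directions, so the gradient at `z` makes a nonnegative angle with one of them, and pseudoconvexity
gives `P z ≤ P x ≤ P y` or `P z ≤ P y`. The first-order condition at the maximum `y` is
`⟪∇P y, x - y⟫ ≤ 0`, which is pseudomonotonicity. Conversely, if `∇P` is pseudomonotone and
`⟪∇P x, y - x⟫ ≥ 0`, then `t ↦ P (x + t • (y - x))` has derivative `⟪∇P z, y - x⟫ ≥ 0` at every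
`z = x + t • (y - x)`, so it is monotone on `[0, 1]`. -/

section

variable {E : Type*} [NormedAddCommGroup E] [InnerProductSpace ℝ E]

def PseudomonotoneOn (G : E → E) (X : Set E) : Prop :=
  ∀ x ∈ X, ∀ y ∈ X, 0 ≤ ⟪G x, y - x⟫ → 0 ≤ ⟪G y, y - x⟫

/-- Pseudoconvexity of `P` on `X`, phrased through a map `G` standing for the gradient of `P`. -/
def PseudoconvexOn (P : E → ℝ) (G : E → E) (X : Set E) : Prop :=
  ∀ x ∈ X, ∀ y ∈ X, 0 ≤ ⟪G x, y - x⟫ → P x ≤ P y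

variable {P : E → ℝ} {G : E → E} {X : Set E}

theorem PseudoconvexOn.isMaxOn_segment (hX : Convex ℝ X) (hPX : PseudoconvexOn P G X)
    {x y : E} (hx : x ∈ X) (hy : y ∈ X) (hxy : 0 ≤ ⟪G x, y - x⟫) :
    IsMaxOn P (segment ℝ x y) y := by
  rintro z ⟨a, b, ha, hb, hab, rfl⟩
  have hz : a • x + b • y ∈ X := hX hx hy ha hb hab
  obtain rfl : b = 1 - a := by linarith
  have hxz : x - (a • x + (1 - a) • y) = (1 - a) • (x - y) := by module
  have hyz : y - (a • x + (1 - a) • y) = (-a) • (x - y) := by module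
  show P (a • x + (1 - a) • y) ≤ P y
  rcases le_total 0 ⟪G (a • x + (1 - a) • y), x - y⟫ with hc | hc
  · have hzx := hPX _ hz x hx (by rw [hxz, real_inner_smul_right]; exact mul_nonneg hb hc)
    exact hzx.trans (hPX x hx y hy hxy)
  · exact hPX _ hz y hy (by rw [hyz, real_inner_smul_right]; nlinarith)

variable [CompleteSpace E]

theorem HasGradientAt.hasDerivAt_comp_add_smul {g x v : E} {t : ℝ}
    (h : HasGradientAt P g (x + t • v)) :
    HasDerivAt (fun s : ℝ => P (x + s • v)) ⟪g, v⟫ t := by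
  have hline : HasDerivAt (fun s : ℝ => x + s • v) v t := by
    simpa using ((hasDerivAt_id t).smul_const v).const_add x
  have := h.hasFDerivAt.comp_hasDerivAt t hline
  simp only [Function.comp_def, InnerProductSpace.toDual_apply_apply] at this
  exact this

theorem HasGradientAt.inner_nonpos_of_isMaxOn_segment {g x y : E} (hP : HasGradientAt P g y)
    (hmax : IsMaxOn P (segment ℝ x y) y) : ⟪g, x - y⟫ ≤ 0 := by
  have hcone : x - y ∈ posTangentConeAt (segment ℝ x y) y :=
    sub_mem_posTangentConeAt_of_segment_subset (segment_symm ℝ y x).subset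
  simpa using hmax.localize.hasFDerivWithinAt_nonpos hP.hasFDerivAt.hasFDerivWithinAt hcone

theorem PseudoconvexOn.pseudomonotoneOn (hX : Convex ℝ X) (hP : ∀ x ∈ X, HasGradientAt P (G x) x)
    (hPX : PseudoconvexOn P G X) : PseudomonotoneOn G X := by
  intro x hx y hy hxy
  have h := (hP y hy).inner_nonpos_of_isMaxOn_segment (hPX.isMaxOn_segment hX hx hy hxy)
  rw [← neg_sub, inner_neg_right] at h
  linarith

theorem PseudomonotoneOn.pseudoconvexOn (hX : Convex ℝ X) (hP : ∀ x ∈ X, HasGradientAt P (G x) x)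
    (hG : PseudomonotoneOn G X) : PseudoconvexOn P G X := by
  intro x hx y hy hxy
  have hmem : ∀ t ∈ Set.Icc (0 : ℝ) 1, x + t • (y - x) ∈ X := fun t ht =>
    hX.add_smul_sub_mem hx hy ht
  have hderiv : ∀ t ∈ Set.Icc (0 : ℝ) 1,
      HasDerivAt (fun s : ℝ => P (x + s • (y - x))) ⟪G (x + t • (y - x)), y - x⟫ t :=
    fun t ht => (hP _ (hmem t ht)).hasDerivAt_comp_add_smul
  have hmono : MonotoneOn (fun s : ℝ => P (x + s • (y - x))) (Set.Icc 0 1) := by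
    refine monotoneOn_of_hasDerivWithinAt_nonneg (f' := fun t => ⟪G (x + t • (y - x)), y - x⟫)
      (convex_Icc 0 1)
      (fun t ht => (hderiv t ht).continuousAt.continuousWithinAt) ?_ ?_
    · rw [interior_Icc]
      exact fun t ht => (hderiv t (Set.Ioo_subset_Icc_self ht)).hasDerivWithinAt
    · rw [interior_Icc]
      intro t ht
      have hzx : (x + t • (y - x)) - x = t • (y - x) := by abel
      have hmon := hG x hx _ (hmem t (Set.Ioo_subset_Icc_self ht))
        (by rw [hzx, real_inner_smul_right]; exact mul_nonneg ht.1.le hxy)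
      rw [hzx, real_inner_smul_right] at hmon
      exact nonneg_of_mul_nonneg_right hmon ht.1
  simpa using hmono (Set.left_mem_Icc.2 zero_le_one) (Set.right_mem_Icc.2 zero_le_one) zero_le_one

end

theorem stmt_12_general {n : ℕ} (X O : Set (EuclideanSpace ℝ (Fin n)))
    (hXO : X ⊆ O) (hX : Convex ℝ X)
    (P : EuclideanSpace ℝ (Fin n) → ℝ)
    (G : EuclideanSpace ℝ (Fin n) → EuclideanSpace ℝ (Fin n))
    (hP : ∀ x ∈ O, HasGradientAt P (G x) x) :
    (∀ x ∈ X, ∀ y ∈ X, 0 ≤ ⟪G x, y - x⟫ → 0 ≤ ⟪G y, y - x⟫) ↔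
    (∀ x ∈ X, ∀ y ∈ X, 0 ≤ ⟪G x, y - x⟫ → P x ≤ P y) := by
  have hPX : ∀ x ∈ X, HasGradientAt P (G x) x := fun x hx => hP x (hXO hx)
  exact ⟨PseudomonotoneOn.pseudoconvexOn hX hPX, PseudoconvexOn.pseudomonotoneOn hX hPX⟩

/-- **Pseudomonotonicity of the gradient ⟺ pseudoconvexity of the function.**
`P` is continuously differentiable (with gradient map `G`) on an open set `O` containing
the convex set `X`. Then `G = ∇P` is pseudomonotone on `X` iff `P` is pseudoconvex on `X`. -/
theorem stmt_12 {n : ℕ} (X O : Set (EuclideanSpace ℝ (Fin n)))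
    (hO : IsOpen O) (hXO : X ⊆ O) (hX : Convex ℝ X)
    (P : EuclideanSpace ℝ (Fin n) → ℝ)
    (G : EuclideanSpace ℝ (Fin n) → EuclideanSpace ℝ (Fin n))
    (hP : ∀ x ∈ O, HasGradientAt P (G x) x)
    (hG : ContinuousOn G O) :
    (∀ x ∈ X, ∀ y ∈ X, 0 ≤ ⟪G x, y - x⟫ → 0 ≤ ⟪G y, y - x⟫) ↔
    (∀ x ∈ X, ∀ y ∈ X, 0 ≤ ⟪G x, y - x⟫ → P x ≤ P y) :=
  stmt_12_general X O hXO hX P G hP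
end

section
/- Let a > 0, b satisfy 0 < 2b ≤ a, c ≥ 1, and N a positive integer. Then for every x ∈ ℝ^N satisfying Σ_{i=1}^N x_i² ≤ N a² and 0 ≤ x_i ≤ c a for all i ∈ {1,…,N}, one has −(1/2) Σ_{i=1}^N (x_i² − 2 b x_i) ≥ −(1/2) N a² + N b a / c. Equivalently, the minimum value of −(1/2) Σ_{i=1}^N (x_i² − 2 b x_i) over this feasible set is at least −(1/2) N a² + N b a / c. -/
/-!
Since `0 ≤ xᵢ ≤ c a`, we have `xᵢ² ≤ c a · xᵢ`, so the linear term is bounded below by the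
quadratic one: `∑ xᵢ ≥ (∑ xᵢ²) / (c a)`. The objective is therefore at least
`S (b / (c a) - 1/2)` with `S = ∑ xᵢ²`, and this coefficient is nonpositive because
`2 b ≤ a ≤ c a`; so the worst case is the largest admissible `S`, namely `N a²`.
-/

theorem Finset.sum_sq_le_mul_sum {ι R : Type*} [CommSemiring R] [PartialOrder R]
    [IsOrderedRing R] (s : Finset ι) (f : ι → R) {M : R}
    (hf : ∀ i ∈ s, 0 ≤ f i ∧ f i ≤ M) : ∑ i ∈ s, f i ^ 2 ≤ M * ∑ i ∈ s, f i := by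
  rw [Finset.mul_sum]
  refine Finset.sum_le_sum fun i hi => ?_
  obtain ⟨h0, hM⟩ := hf i hi
  rw [sq, mul_comm M]
  exact mul_le_mul_of_nonneg_left hM h0

theorem neg_half_mul_add_mul_div_le {S T K M b : ℝ} (hM : 0 < M) (hb : 0 ≤ b)
    (hbM : 2 * b ≤ M) (hST : S ≤ M * T) (hSK : S ≤ K) :
    -(1 / 2) * K + b * K / M ≤ -(1 / 2) * S + b * T := by
  have hT : b * S / M ≤ b * T := by
    rw [mul_div_assoc]
    exact mul_le_mul_of_nonneg_left ((div_le_iff₀' hM).2 hST) hb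
  have hcoef : b / M - 1 / 2 ≤ 0 := by
    rw [sub_nonpos, div_le_iff₀ hM]
    linarith
  calc -(1 / 2) * K + b * K / M = K * (b / M - 1 / 2) := by ring
    _ ≤ S * (b / M - 1 / 2) := mul_le_mul_of_nonpos_right hSK hcoef
    _ = -(1 / 2) * S + b * S / M := by ring
    _ ≤ -(1 / 2) * S + b * T := by linarith

theorem stmt_14_general (a b c : ℝ) (N : ℕ) (hb : 0 < b)
    (hba : 2 * b ≤ a) (hc : 1 ≤ c)
    (x : Fin N → ℝ) (hsum : ∑ i, x i ^ 2 ≤ N * a ^ 2)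
    (hbox : ∀ i, 0 ≤ x i ∧ x i ≤ c * a) :
    -(1 / 2) * (N : ℝ) * a ^ 2 + N * b * a / c ≤ -(1 / 2) * ∑ i, (x i ^ 2 - 2 * b * x i) := by
  have ha : 0 < a := by linarith
  have hc0 : 0 < c := by linarith
  have h2b : 2 * b ≤ c * a := hba.trans (le_mul_of_one_le_left ha.le hc)
  have hST := Finset.univ.sum_sq_le_mul_sum x fun i _ => hbox i
  have key := neg_half_mul_add_mul_div_le (mul_pos hc0 ha) hb.le h2b hST hsum
  have hsplit : ∑ i, (x i ^ 2 - 2 * b * x i) = ∑ i, x i ^ 2 - 2 * b * ∑ i, x i := by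
    rw [Finset.sum_sub_distrib, ← Finset.mul_sum]
  have hrhs : b * (N * a ^ 2) / (c * a) = N * b * a / c := by
    field_simp
  rw [hsplit]
  linarith

/-- **Key constrained-minimization lower bound** (Chen et al.): if `0 < 2b ≤ a`, `c ≥ 1`,
`∑ x_i² ≤ N a²` and `0 ≤ x_i ≤ c a` for all `i`, then
`−(1/2)∑ (x_i² − 2 b x_i) ≥ −(1/2) N a² + N b a / c`. -/
theorem stmt_14 (a b c : ℝ) (N : ℕ) (hN : 0 < N) (ha : 0 < a) (hb : 0 < b)
    (hba : 2 * b ≤ a) (hc : 1 ≤ c)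
    (x : Fin N → ℝ) (hsum : ∑ i, x i ^ 2 ≤ N * a ^ 2)
    (hbox : ∀ i, 0 ≤ x i ∧ x i ≤ c * a) :
    -(1 / 2) * (N : ℝ) * a ^ 2 + N * b * a / c ≤ -(1 / 2) * ∑ i, (x i ^ 2 - 2 * b * x i) :=
  stmt_14_general a b c N hb hba hc x hsum hbox
end
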